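/- Let w = vσ_j ∈ L_n with v ∈ A_n^* and 1 ≤ j ≤ n−1. Then v ∈ L_n, and F_n^min(w) equals the set of ≼-minimal elements of the set {σ_1,…,σ_{j−2}, σ_{j−1}σ_j} ∪ {γ ∈ B_n^+ : there exists β ∈ F_n^min(v) such that σ_j·γ is a least common right-multiple of σ_j and β} (with the convention that terms involving indices less than 1 are omitted). -/

import Mathlib

/-!
Common setup: the positive braid monoid `B_n^+` on `n` strands, presented by the
Artin generators `σ_1, …, σ_{n-1}` (1-based indexing) with the braid relations;
lex-representatives, forbidden prefixes, admissible functions, etc.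
-/

namespace BraidPaper

/-- Words in the Artin generators: the free monoid on `n - 1` letters. -/
abbrev Word (n : ℕ) := FreeMonoid (Fin (n - 1))

/-- The generator `σ_i` (`1 ≤ i ≤ n - 1`, 1-based) as a one-letter word;
the empty word for out-of-range indices. -/
def sigma (n : ℕ) (i : ℕ) : Word n :=
  if h : 1 ≤ i ∧ i ≤ n - 1 then FreeMonoid.of (⟨i - 1, by omega⟩ : Fin (n - 1)) else 1

/-- The braid relations. -/
inductive BraidRel (n : ℕ) : Word n → Word n → Prop
  | comm : ∀ i j : ℕ, 1 ≤ i → i ≤ n - 1 → 1 ≤ j → j ≤ n - 1 → (i + 2 ≤ j ∨ j + 2 ≤ i) →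
      BraidRel n (sigma n i * sigma n j) (sigma n j * sigma n i)
  | braid : ∀ i : ℕ, 1 ≤ i → i + 1 ≤ n - 1 →
      BraidRel n (sigma n i * sigma n (i + 1) * sigma n i)
        (sigma n (i + 1) * sigma n i * sigma n (i + 1))

/-- The congruence generated by the braid relations. -/
def braidCon (n : ℕ) : Con (Word n) := conGen (BraidRel n)

/-- The positive braid monoid `B_n^+`. -/
abbrev PB (n : ℕ) := (braidCon n).Quotient

/-- The canonical projection `b : A_n^* → B_n^+`. -/
def pr (n : ℕ) : Word n →* PB n := (braidCon n).mk'

/-- The length homomorphism on words (with values in `Multiplicative ℕ`). -/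
def lenHom (n : ℕ) : Word n →* Multiplicative ℕ :=
  FreeMonoid.lift fun _ => Multiplicative.ofAdd 1

lemma lenHom_sigma (n t : ℕ) (h1 : 1 ≤ t) (h2 : t ≤ n - 1) :
    lenHom n (sigma n t) = Multiplicative.ofAdd 1 := by
  rw [sigma, dif_pos ⟨h1, h2⟩]
  exact FreeMonoid.lift_eval_of _ _

lemma braidCon_le_ker (n : ℕ) : braidCon n ≤ Con.ker (lenHom n) := by
  refine Con.conGen_le.2 ?_
  intro x y h
  rw [Con.ker_rel]
  cases h with
  | comm i j hi hi' hj hj' hij =>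
      rw [map_mul, map_mul, mul_comm]
  | braid i hi hi' =>
      rw [map_mul, map_mul, map_mul, map_mul,
        lenHom_sigma n i hi (by omega), lenHom_sigma n (i + 1) (by omega) hi']

/-- The (well-defined) length of a positive braid. -/
def len (n : ℕ) (x : PB n) : ℕ :=
  Multiplicative.toAdd (Con.lift _ (lenHom n) (braidCon_le_ker n) x)

/-- The length of a word. -/
def wlen {n : ℕ} (w : Word n) : ℕ := (FreeMonoid.toList w).length

/-- Strict lexicographic order on words, induced by `σ_1 < σ_2 < ⋯ < σ_{n-1}`. -/
def lexLt {n : ℕ} (u v : Word n) : Prop :=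
  List.Lex (· < ·) (FreeMonoid.toList u) (FreeMonoid.toList v)

/-- `L_n`: the set of lex-representatives, i.e. words that are `≤_lex`-minimal among
all words representing the same element of `B_n^+` (all of which have equal length). -/
def Ln (n : ℕ) : Set (Word n) :=
  {w | ∀ v : Word n, pr n v = pr n w → ¬ lexLt v w}

open Classical in
/-- `ω(β)`: the lex-representative of a positive braid `β`. -/
noncomputable def omegaRep (n : ℕ) (β : PB n) : Word n :=
  if h : ∃ w : Word n, pr n w = β ∧ w ∈ Ln n then h.choose else 1

/-- `F_n(w)`: the set of forbidden prefixes after `w`. -/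
def Fset (n : ℕ) (w : Word n) : Set (PB n) :=
  {α | w * omegaRep n α ∉ Ln n}

/-- Left-divisibility `a ≼ b` in `B_n^+`. -/
def ldvd (n : ℕ) (a b : PB n) : Prop := ∃ c : PB n, a * c = b

/-- The set of `≼`-minimal elements of a subset of `B_n^+`. -/
def minimals (n : ℕ) (S : Set (PB n)) : Set (PB n) :=
  {a | a ∈ S ∧ ∀ b ∈ S, ldvd n b a → b = a}

/-- `F_n^min(w)`: the set of minimal forbidden prefixes after `w`. -/
def Fmin (n : ℕ) (w : Word n) : Set (PB n) := minimals n (Fset n w)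

/-- `d` is a least common right-multiple of the set `S`. -/
def IsLcm (n : ℕ) (S : Set (PB n)) (d : PB n) : Prop :=
  (∀ a ∈ S, ldvd n a d) ∧ ∀ e : PB n, (∀ a ∈ S, ldvd n a e) → ldvd n d e

/-- The descending product `σ_a σ_{a-1} ⋯ σ_b` (empty if `b > a`). -/
def prodDesc (n a b : ℕ) : Word n :=
  (((List.range' b (a + 1 - b)).reverse).map (sigma n)).prod

/-- The ascending product `σ_a σ_{a+1} ⋯ σ_b` (empty if `a > b`). -/
def prodAsc (n a b : ℕ) : Word n :=
  ((List.range' a (b + 1 - a)).map (sigma n)).prod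

/-- Admissible functions `f : {1,…,n-1} → {-1,0,1,…,n-1}`. -/
def Admissible (n : ℕ) (f : ℕ → ℤ) : Prop :=
  (∀ i : ℕ, 1 ≤ i → i ≤ n - 1 → -1 ≤ f i ∧ f i ≤ (i : ℤ)) ∧ f 1 ≠ -1

/-- The set `F_f ⊆ B_n^+` associated to an admissible function `f`: the elements
`σ_i σ_{i-1} ⋯ σ_{f(i)}` for `i` with `1 ≤ f(i) ≤ i`, together with the elements
`σ_{i-1} σ_i` for `i` with `f(i) = -1`. -/
def Ff (n : ℕ) (f : ℕ → ℤ) : Set (PB n) :=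
  {x | ∃ i : ℕ, 1 ≤ i ∧ i ≤ n - 1 ∧ 1 ≤ f i ∧ f i ≤ (i : ℤ) ∧
        x = pr n (prodDesc n i (f i).toNat)} ∪
  {x | ∃ i : ℕ, 1 ≤ i ∧ i ≤ n - 1 ∧ f i = -1 ∧ x = pr n (sigma n (i - 1) * sigma n i)}

/-- `F_n^min(w, m)`: the set of `≼`-minimal elements of `{σ_1,…,σ_m} ∪ F_n^min(w)`. -/
def FminM (n : ℕ) (w : Word n) (m : ℕ) : Set (PB n) :=
  minimals n ({x | ∃ i : ℕ, 1 ≤ i ∧ i ≤ m ∧ x = pr n (sigma n i)} ∪ Fmin n w)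

/-- `x_{n,j}` (for `j : ℤ`): the number of elements of `B_n^+` of length `j`
(`0` for negative `j`). -/
noncomputable def xcount (n : ℕ) (j : ℤ) : ℕ :=
  Nat.card {x : PB n // (len n x : ℤ) = j}

/-- `x_{n,k}(w,m)`: the number of words in `L_n` of length `k` of the form `w·w'`,
where `w'` does not begin with any of `σ_1, …, σ_m`. -/
noncomputable def xwm (n k : ℕ) (w : Word n) (m : ℕ) : ℕ :=
  Nat.card {v : Word n // wlen v = k ∧ v ∈ Ln n ∧
    ∃ w' : Word n, v = w * w' ∧
      ∀ i : ℕ, 1 ≤ i → i ≤ m → ¬ ∃ u : Word n, w' = sigma n i * u}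


/-!
Everything rests on Garside's lemma for the braid relations: if the words `a·u` and `b·v` are
equivalent, then `u ≡ v` when `a = b`, `u ≡ b·C` and `v ≡ a·C` for some `C` when `|a - b| ≥ 2`,
and `u ≡ b·a·C` and `v ≡ a·b·C` for some `C` when `|a - b| = 1`. It yields left cancellation in
`B_n^+`, and the existence of the lcm of a generator and any element having a common multiple
with it.

A word is a lex-representative iff none of its suffixes `a·t` is left-divisible by a letter
`σ_i` with `i < a`. Hence `α` is forbidden after `vσ_j` iff either `σ_i ≼ σ_j α` for some
`i < j`, i.e. `σ_i ≼ α` with `i ≤ j - 2` or `σ_{j-1}σ_j ≼ α`, or `σ_j α` is forbidden after `v`,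
i.e. `γ ≼ α` where `σ_j γ` is the lcm of `σ_j` and a minimal forbidden prefix after `v`. So
`F_n(vσ_j)` is the upper closure of the displayed set, and the two have the same minimal elements.
-/

abbrev Letter (n : ℕ) := Fin (n - 1)

variable {n : ℕ}

def Distant (a b : Letter n) : Prop := a.1 + 2 ≤ b.1 ∨ b.1 + 2 ≤ a.1

def Adjacent (a b : Letter n) : Prop := a.1 + 1 = b.1 ∨ b.1 + 1 = a.1

lemma Distant.symm {a b : Letter n} (h : Distant a b) : Distant b a := Or.symm h

lemma Adjacent.symm {a b : Letter n} (h : Adjacent a b) : Adjacent b a := Or.symm h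

lemma Distant.ne {a b : Letter n} (h : Distant a b) : a ≠ b := by
  rintro rfl; unfold Distant at h; omega

lemma Adjacent.ne {a b : Letter n} (h : Adjacent a b) : a ≠ b := by
  rintro rfl; unfold Adjacent at h; omega

lemma Distant.not_adjacent {a b : Letter n} (h : Distant a b) : ¬ Adjacent a b := by
  unfold Distant at h; unfold Adjacent; omega

lemma eq_or_distant_or_adjacent (a b : Letter n) : a = b ∨ Distant a b ∨ Adjacent a b := by
  rw [Fin.ext_iff]
  unfold Distant Adjacent
  omega

/-! ### Words modulo the braid relations -/

inductive BraidMove : List (Letter n) → List (Letter n) → Prop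
  | swap {a b : Letter n} : Distant a b → BraidMove [a, b] [b, a]
  | braid {a b : Letter n} : Adjacent a b → BraidMove [a, b, a] [b, a, b]

lemma BraidMove.symm {u v : List (Letter n)} (h : BraidMove u v) : BraidMove v u := by
  cases h with
  | swap h => exact .swap h.symm
  | braid h => exact .braid h.symm

lemma BraidMove.length_eq {u v : List (Letter n)} (h : BraidMove u v) : u.length = v.length := by
  cases h <;> rfl

def BraidStep (u v : List (Letter n)) : Prop :=
  ∃ p x y s, BraidMove x y ∧ u = p ++ x ++ s ∧ v = p ++ y ++ s

def WordEquiv : List (Letter n) → List (Letter n) → Prop := Relation.ReflTransGen BraidStep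

infix:50 " ≈ᵇ " => WordEquiv

namespace WordEquiv

lemma refl (u : List (Letter n)) : u ≈ᵇ u := Relation.ReflTransGen.refl

lemma trans {u v w : List (Letter n)} (h : u ≈ᵇ v) (h' : v ≈ᵇ w) : u ≈ᵇ w :=
  Relation.ReflTransGen.trans h h'

lemma symm {u v : List (Letter n)} (h : u ≈ᵇ v) : v ≈ᵇ u := by
  induction h with
  | refl => exact refl _
  | tail _ hs ih =>
    obtain ⟨p, x, y, s, hm, rfl, rfl⟩ := hs
    exact ih.head ⟨p, y, x, s, hm.symm, rfl, rfl⟩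

lemma length_eq {u v : List (Letter n)} (h : u ≈ᵇ v) : u.length = v.length := by
  induction h with
  | refl => rfl
  | tail _ hs ih =>
    obtain ⟨p, x, y, s, hm, rfl, rfl⟩ := hs
    simpa [hm.length_eq] using ih

lemma append {u v : List (Letter n)} (h : u ≈ᵇ v) (p s : List (Letter n)) :
    p ++ u ++ s ≈ᵇ p ++ v ++ s := by
  induction h with
  | refl => exact refl _
  | tail _ hs ih =>
    obtain ⟨p', x, y, s', hm, rfl, rfl⟩ := hs
    exact ih.tail ⟨p ++ p', x, y, s' ++ s, hm, by simp, by simp⟩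

lemma cons {u v : List (Letter n)} (h : u ≈ᵇ v) (a : Letter n) : a :: u ≈ᵇ a :: v := by
  simpa using h.append [a] []

lemma swap {a b : Letter n} (h : Distant a b) (t : List (Letter n)) :
    a :: b :: t ≈ᵇ b :: a :: t :=
  .single ⟨[], [a, b], [b, a], t, .swap h, rfl, rfl⟩

lemma braid {a b : Letter n} (h : Adjacent a b) (t : List (Letter n)) :
    a :: b :: a :: t ≈ᵇ b :: a :: b :: t :=
  .single ⟨[], [a, b, a], [b, a, b], t, .braid h, rfl, rfl⟩

end WordEquiv

instance : @Trans (List (Letter n)) _ _ WordEquiv WordEquiv WordEquiv := ⟨WordEquiv.trans⟩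

lemma BraidStep.cons_cases {a : Letter n} {u w : List (Letter n)} (h : BraidStep (a :: u) w) :
    (∃ u', w = a :: u' ∧ BraidStep u u') ∨
    (∃ c t, Distant a c ∧ u = c :: t ∧ w = c :: a :: t) ∨
    (∃ c t, Adjacent a c ∧ u = c :: a :: t ∧ w = c :: a :: c :: t) := by
  obtain ⟨p, x, y, s, hm, hu, rfl⟩ := h
  cases p with
  | cons a' p =>
    obtain ⟨rfl, rfl⟩ := List.cons.inj hu
    exact .inl ⟨_, rfl, p, x, y, s, hm, rfl, rfl⟩
  | nil =>
    cases hm with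
    | swap h =>
      obtain ⟨rfl, rfl⟩ := List.cons.inj hu
      exact .inr (.inl ⟨_, s, h, rfl, rfl⟩)
    | braid h =>
      obtain ⟨rfl, rfl⟩ := List.cons.inj hu
      exact .inr (.inr ⟨_, s, h, rfl, rfl⟩)

/-! ### Garside's lemma on the first letters of equivalent words -/

def HeadSplit (a b : Letter n) (u v : List (Letter n)) : Prop :=
  (a = b → u ≈ᵇ v) ∧
  (Distant a b → ∃ C, u ≈ᵇ b :: C ∧ v ≈ᵇ a :: C) ∧
  (Adjacent a b → ∃ C, u ≈ᵇ b :: a :: C ∧ v ≈ᵇ a :: b :: C)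

def HeadSplitBelow (n N : ℕ) : Prop :=
  ∀ (a b : Letter n) (u v : List (Letter n)), u.length < N → a :: u ≈ᵇ b :: v → HeadSplit a b u v

namespace HeadSplit

variable {a b : Letter n} {u v : List (Letter n)}

lemma of_eq (h : u ≈ᵇ v) : HeadSplit a a u v :=
  ⟨fun _ => h, fun hd => absurd rfl hd.ne, fun ha => absurd rfl ha.ne⟩

lemma of_distant (hab : Distant a b) (C : List (Letter n)) (hu : u ≈ᵇ b :: C)
    (hv : v ≈ᵇ a :: C) : HeadSplit a b u v :=
  ⟨fun h => absurd h hab.ne, fun _ => ⟨C, hu, hv⟩, fun h => absurd h hab.not_adjacent⟩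

lemma of_adjacent (hab : Adjacent a b) (C : List (Letter n)) (hu : u ≈ᵇ b :: a :: C)
    (hv : v ≈ᵇ a :: b :: C) : HeadSplit a b u v :=
  ⟨fun h => absurd h hab.ne, fun h => absurd hab h.not_adjacent, fun _ => ⟨C, hu, hv⟩⟩

lemma of_equiv_left {u' : List (Letter n)} (h : u ≈ᵇ u') (K : HeadSplit a b u' v) :
    HeadSplit a b u v :=
  ⟨fun he => h.trans (K.1 he),
    fun hd => let ⟨C, h1, h2⟩ := K.2.1 hd; ⟨C, h.trans h1, h2⟩,
    fun ha => let ⟨C, h1, h2⟩ := K.2.2 ha; ⟨C, h.trans h1, h2⟩⟩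

end HeadSplit

section HeadMoves

variable {a b c : Letter n} {T v : List (Letter n)}

lemma headSplit_swap_of_distant (ih : HeadSplitBelow n (T.length + 1)) (hac : Distant a c)
    (hcb : Distant c b) (C : List (Letter n)) (hT : a :: T ≈ᵇ b :: C) (hv : v ≈ᵇ c :: C) :
    HeadSplit a b (c :: T) v := by
  have K := ih a b T C (by omega) hT
  rcases eq_or_distant_or_adjacent a b with rfl | hab | hab
  · exact .of_eq (((K.1 rfl).cons c).trans hv.symm)
  · obtain ⟨D, hTD, hCD⟩ := K.2.1 hab
    exact .of_distant hab (c :: D) ((hTD.cons c).trans (.swap hcb D))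
      (hv.trans ((hCD.cons c).trans (.swap hac.symm D)))
  · obtain ⟨D, hTD, hCD⟩ := K.2.2 hab
    exact .of_adjacent hab (c :: D)
      ((hTD.cons c).trans ((WordEquiv.swap hcb (a :: D)).trans
        ((WordEquiv.swap hac.symm D).cons b)))
      (hv.trans ((hCD.cons c).trans ((WordEquiv.swap hac.symm (b :: D)).trans
        ((WordEquiv.swap hcb D).cons a))))

lemma headSplit_swap_of_adjacent (ih : HeadSplitBelow n (T.length + 1)) (hac : Distant a c)
    (hcb : Adjacent c b) (C : List (Letter n)) (hT : a :: T ≈ᵇ b :: c :: C)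
    (hv : v ≈ᵇ c :: b :: C) : HeadSplit a b (c :: T) v := by
  have hlen := hT.length_eq
  simp only [List.length_cons] at hlen
  have K := ih a b T (c :: C) (by omega) hT
  rcases eq_or_distant_or_adjacent a b with rfl | hab | hab
  · exact absurd hcb.symm hac.not_adjacent
  · obtain ⟨D, hTD, hcCD⟩ := K.2.1 hab
    obtain ⟨E, hCE, hDE⟩ := (ih c a C D (by omega) hcCD).2.1 hac.symm
    exact .of_distant hab (c :: b :: E)
      ((hTD.cons c).trans (((hDE.cons b).cons c).trans (.braid hcb E)))
      (hv.trans (((hCE.cons b).cons c).trans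
        (((WordEquiv.swap hab.symm E).cons c).trans (.swap hac.symm (b :: E)))))
  · obtain ⟨D, hTD, hcCD⟩ := K.2.2 hab
    have hlen' := hcCD.length_eq
    simp only [List.length_cons] at hlen'
    obtain ⟨E, hCE, hbDE⟩ := (ih c a C (b :: D) (by omega) hcCD).2.1 hac.symm
    obtain ⟨F, hDF, hEF⟩ := (ih b c D E (by omega) hbDE).2.2 hcb.symm
    refine .of_adjacent hab (c :: b :: a :: F) ?_ ?_
    · calc c :: T ≈ᵇ c :: b :: a :: D := hTD.cons c
        _ ≈ᵇ c :: b :: a :: c :: b :: F := ((hDF.cons a).cons b).cons c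
        _ ≈ᵇ c :: b :: c :: a :: b :: F := ((WordEquiv.swap hac (b :: F)).cons b).cons c
        _ ≈ᵇ b :: c :: b :: a :: b :: F := .braid hcb (a :: b :: F)
        _ ≈ᵇ b :: c :: a :: b :: a :: F := ((WordEquiv.braid hab.symm F).cons c).cons b
        _ ≈ᵇ b :: a :: c :: b :: a :: F := (WordEquiv.swap hac.symm (b :: a :: F)).cons b
    · calc v ≈ᵇ c :: b :: C := hv
        _ ≈ᵇ c :: b :: a :: E := (hCE.cons b).cons c
        _ ≈ᵇ c :: b :: a :: b :: c :: F := ((hEF.cons a).cons b).cons c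
        _ ≈ᵇ c :: a :: b :: a :: c :: F := (WordEquiv.braid hab.symm (c :: F)).cons c
        _ ≈ᵇ a :: c :: b :: a :: c :: F := .swap hac.symm (b :: a :: c :: F)
        _ ≈ᵇ a :: c :: b :: c :: a :: F := (((WordEquiv.swap hac F).cons b).cons c).cons a
        _ ≈ᵇ a :: b :: c :: b :: a :: F := (WordEquiv.braid hcb (a :: F)).cons a

lemma headSplit_braid_of_distant (ih : HeadSplitBelow n (T.length + 2)) (hac : Adjacent a c)
    (hcb : Distant c b) (C : List (Letter n)) (hT : a :: c :: T ≈ᵇ b :: C)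
    (hv : v ≈ᵇ c :: C) : HeadSplit a b (c :: a :: T) v := by
  have K := ih a b (c :: T) C (by simp) hT
  rcases eq_or_distant_or_adjacent a b with rfl | hab | hab
  · exact absurd hac hcb.symm.not_adjacent
  · obtain ⟨D, hcTD, hCD⟩ := K.2.1 hab
    obtain ⟨E, hTE, hDE⟩ := (ih c b T D (by omega) hcTD).2.1 hcb
    refine .of_distant hab (c :: a :: E) ?_ ?_
    · calc c :: a :: T ≈ᵇ c :: a :: b :: E := (hTE.cons a).cons c
        _ ≈ᵇ c :: b :: a :: E := (WordEquiv.swap hab E).cons c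
        _ ≈ᵇ b :: c :: a :: E := .swap hcb (a :: E)
    · calc v ≈ᵇ c :: a :: D := hv.trans (hCD.cons c)
        _ ≈ᵇ c :: a :: c :: E := (hDE.cons a).cons c
        _ ≈ᵇ a :: c :: a :: E := .braid hac.symm E
  · obtain ⟨D, hcTD, hCD⟩ := K.2.2 hab
    obtain ⟨E, hTE, haDE⟩ := (ih c b T (a :: D) (by omega) hcTD).2.1 hcb
    have hlen := hcTD.length_eq
    simp only [List.length_cons] at hlen
    obtain ⟨F, hDF, hEF⟩ := (ih a c D E (by omega) haDE).2.2 hac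
    refine .of_adjacent hab (c :: a :: b :: F) ?_ ?_
    · calc c :: a :: T ≈ᵇ c :: a :: b :: E := (hTE.cons a).cons c
        _ ≈ᵇ c :: a :: b :: a :: c :: F := ((hEF.cons b).cons a).cons c
        _ ≈ᵇ c :: b :: a :: b :: c :: F := (WordEquiv.braid hab (c :: F)).cons c
        _ ≈ᵇ b :: c :: a :: b :: c :: F := .swap hcb (a :: b :: c :: F)
        _ ≈ᵇ b :: c :: a :: c :: b :: F := (((WordEquiv.swap hcb.symm F).cons a).cons c).cons b
        _ ≈ᵇ b :: a :: c :: a :: b :: F := (WordEquiv.braid hac.symm (b :: F)).cons b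
    · calc v ≈ᵇ c :: a :: b :: D := hv.trans (hCD.cons c)
        _ ≈ᵇ c :: a :: b :: c :: a :: F := ((hDF.cons b).cons a).cons c
        _ ≈ᵇ c :: a :: c :: b :: a :: F := ((WordEquiv.swap hcb.symm (a :: F)).cons a).cons c
        _ ≈ᵇ a :: c :: a :: b :: a :: F := .braid hac.symm (b :: a :: F)
        _ ≈ᵇ a :: c :: b :: a :: b :: F := ((WordEquiv.braid hab F).cons c).cons a
        _ ≈ᵇ a :: b :: c :: a :: b :: F := (WordEquiv.swap hcb (a :: b :: F)).cons a

lemma headSplit_braid_of_adjacent (ih : HeadSplitBelow n (T.length + 2)) (hac : Adjacent a c)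
    (hcb : Adjacent c b) (C : List (Letter n)) (hT : a :: c :: T ≈ᵇ b :: c :: C)
    (hv : v ≈ᵇ c :: b :: C) : HeadSplit a b (c :: a :: T) v := by
  have hlen₀ := hT.length_eq
  simp only [List.length_cons] at hlen₀
  have K := ih a b (c :: T) (c :: C) (by simp) hT
  rcases eq_or_distant_or_adjacent a b with rfl | hab | hab
  · have hTC := (ih c c T C (by omega) (K.1 rfl)).1 rfl
    exact .of_eq (((hTC.cons a).cons c).trans hv.symm)
  · obtain ⟨D, hcTD, hcCD⟩ := K.2.1 hab
    have hlen := hcTD.length_eq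
    simp only [List.length_cons] at hlen
    obtain ⟨E, hTE, hDE⟩ := (ih c b T D (by omega) hcTD).2.2 hcb
    obtain ⟨F, hCF, hDF⟩ := (ih c a C D (by omega) hcCD).2.2 hac.symm
    have hlen' := hDE.length_eq
    simp only [List.length_cons] at hlen'
    have hbEaF := (ih c c (b :: E) (a :: F) (by simp; omega) (hDE.symm.trans hDF)).1 rfl
    obtain ⟨G, hEG, hFG⟩ := (ih b a E F (by omega) hbEaF).2.1 hab.symm
    refine .of_distant hab (c :: a :: b :: c :: G) ?_ ?_
    · calc c :: a :: T ≈ᵇ c :: a :: b :: c :: E := (hTE.cons a).cons c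
        _ ≈ᵇ c :: a :: b :: c :: a :: G := (((hEG.cons c).cons b).cons a).cons c
        _ ≈ᵇ c :: b :: a :: c :: a :: G := (WordEquiv.swap hab (c :: a :: G)).cons c
        _ ≈ᵇ c :: b :: c :: a :: c :: G := ((WordEquiv.braid hac G).cons b).cons c
        _ ≈ᵇ b :: c :: b :: a :: c :: G := .braid hcb (a :: c :: G)
        _ ≈ᵇ b :: c :: a :: b :: c :: G := ((WordEquiv.swap hab.symm (c :: G)).cons c).cons b
    · calc v ≈ᵇ c :: b :: a :: c :: F := hv.trans ((hCF.cons b).cons c)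
        _ ≈ᵇ c :: b :: a :: c :: b :: G := (((hFG.cons c).cons a).cons b).cons c
        _ ≈ᵇ c :: a :: b :: c :: b :: G := (WordEquiv.swap hab.symm (c :: b :: G)).cons c
        _ ≈ᵇ c :: a :: c :: b :: c :: G := ((WordEquiv.braid hcb.symm G).cons a).cons c
        _ ≈ᵇ a :: c :: a :: b :: c :: G := .braid hac.symm (b :: c :: G)
  · exfalso
    unfold Adjacent at hac hcb hab
    omega

lemma headSplit_swap (ih : HeadSplitBelow n (T.length + 1)) (hac : Distant a c)
    (K : HeadSplit c b (a :: T) v) : HeadSplit a b (c :: T) v := by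
  rcases eq_or_distant_or_adjacent c b with rfl | hcb | hcb
  · exact .of_distant hac T (.refl _) (K.1 rfl).symm
  · obtain ⟨C, hT, hv⟩ := K.2.1 hcb
    exact headSplit_swap_of_distant ih hac hcb C hT hv
  · obtain ⟨C, hT, hv⟩ := K.2.2 hcb
    exact headSplit_swap_of_adjacent ih hac hcb C hT hv

lemma headSplit_braid (ih : HeadSplitBelow n (T.length + 2)) (hac : Adjacent a c)
    (K : HeadSplit c b (a :: c :: T) v) : HeadSplit a b (c :: a :: T) v := by
  rcases eq_or_distant_or_adjacent c b with rfl | hcb | hcb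
  · exact .of_adjacent hac T (.refl _) (K.1 rfl).symm
  · obtain ⟨C, hT, hv⟩ := K.2.1 hcb
    exact headSplit_braid_of_distant ih hac hcb C hT hv
  · obtain ⟨C, hT, hv⟩ := K.2.2 hcb
    exact headSplit_braid_of_adjacent ih hac hcb C hT hv

end HeadMoves

lemma headSplitBelow (N : ℕ) : HeadSplitBelow n N := by
  induction N with
  | zero => intro _ _ u _ hu; simp at hu
  | succ N ih =>
    intro a b u v hu h
    have ih' {m : ℕ} (hm : m ≤ N) : HeadSplitBelow n m := fun a b u v hu => ih a b u v (by omega)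
    -- inner induction on the rewriting chain; its first step either stays inside `u` or
    -- moves the head letter `a`
    generalize hx : a :: u = x at h
    induction h using Relation.ReflTransGen.head_induction_on generalizing a u with
    | refl =>
      obtain ⟨rfl, rfl⟩ := List.cons.inj hx
      exact .of_eq (.refl _)
    | head hs _ IH =>
      subst hx
      rcases hs.cons_cases with ⟨u', rfl, hs'⟩ | ⟨c, t, hac, rfl, rfl⟩ | ⟨c, t, hac, rfl, rfl⟩
      · have hu' : u ≈ᵇ u' := .single hs'
        exact .of_equiv_left hu' (IH a u' (hu'.length_eq ▸ hu) rfl)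
      · simp only [List.length_cons] at hu
        exact headSplit_swap (ih' (by omega)) hac (IH c (a :: t) (by simpa using hu) rfl)
      · simp only [List.length_cons] at hu
        exact headSplit_braid (ih' (by omega)) hac (IH c (a :: c :: t) (by simpa using hu) rfl)

theorem headSplit_of_equiv {a b : Letter n} {u v : List (Letter n)} (h : a :: u ≈ᵇ b :: v) :
    HeadSplit a b u v :=
  headSplitBelow (u.length + 1) a b u v (by omega) h

/-! ### The monoid `B_n^+` -/

def gen (a : Letter n) : PB n := pr n (FreeMonoid.of a)

def prl (l : List (Letter n)) : PB n := pr n (FreeMonoid.ofList l)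

@[simp] lemma prl_nil : prl ([] : List (Letter n)) = 1 := map_one _

lemma prl_append (l₁ l₂ : List (Letter n)) : prl (l₁ ++ l₂) = prl l₁ * prl l₂ := by
  simp [prl, FreeMonoid.ofList_append]

lemma prl_cons (a : Letter n) (l : List (Letter n)) : prl (a :: l) = gen a * prl l := by
  simp [prl, gen, FreeMonoid.ofList_cons]

lemma prl_singleton (a : Letter n) : prl [a] = gen a := by
  rw [prl_cons, prl_nil, mul_one]

lemma prl_toList (w : Word n) : prl (FreeMonoid.toList w) = pr n w := by
  rw [prl, FreeMonoid.ofList_toList]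

lemma exists_prl_eq (x : PB n) : ∃ l : List (Letter n), prl l = x := by
  obtain ⟨w, rfl⟩ := Con.mk'_surjective (c := braidCon n) x
  exact ⟨_, prl_toList w⟩

lemma sigma_val_succ (a : Letter n) : sigma n (a.1 + 1) = FreeMonoid.of a := by
  rw [sigma, dif_pos ⟨by omega, by omega⟩]
  rfl

lemma exists_letter_of_le {i : ℕ} (h1 : 1 ≤ i) (h2 : i ≤ n - 1) : ∃ a : Letter n, i = a.1 + 1 :=
  ⟨⟨i - 1, by omega⟩, by simp only; omega⟩

lemma sigma_succ_val_succ (a : Letter n) (h : a.1 + 1 < n - 1) :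
    sigma n (a.1 + 1 + 1) = FreeMonoid.of ⟨a.1 + 1, h⟩ :=
  sigma_val_succ (⟨a.1 + 1, h⟩ : Letter n)

lemma braidCon_of_braidMove {x y : List (Letter n)} (h : BraidMove x y) :
    braidCon n (FreeMonoid.ofList x) (FreeMonoid.ofList y) := by
  cases h with
  | @swap a b h =>
    have : braidCon n _ _ := ConGen.Rel.of _ _ (BraidRel.comm (n := n) (a.1 + 1) (b.1 + 1)
      (by omega) (by omega) (by omega) (by omega) (by unfold Distant at h; omega))
    simpa [sigma_val_succ] using this
  | @braid a b h =>
    rcases h with h | h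
    · have : braidCon n _ _ := ConGen.Rel.of _ _ (BraidRel.braid (n := n) (a.1 + 1) (by omega)
        (by omega))
      rw [sigma_val_succ, sigma_succ_val_succ a (h ▸ b.2)] at this
      simpa [Fin.ext_iff, h, mul_assoc] using this
    · have : braidCon n _ _ := ConGen.Rel.of _ _ (BraidRel.braid (n := n) (b.1 + 1) (by omega)
        (by omega))
      rw [sigma_val_succ, sigma_succ_val_succ b (h ▸ a.2)] at this
      simpa [Fin.ext_iff, h, mul_assoc] using (braidCon n).symm this

lemma braidCon_of_wordEquiv {x y : List (Letter n)} (h : x ≈ᵇ y) :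
    braidCon n (FreeMonoid.ofList x) (FreeMonoid.ofList y) := by
  induction h with
  | refl => exact (braidCon n).refl _
  | tail _ hs ih =>
    obtain ⟨p, x, y, s, hm, rfl, rfl⟩ := hs
    refine (braidCon n).trans ih ?_
    simpa only [FreeMonoid.ofList_append] using
      (braidCon n).mul ((braidCon n).mul ((braidCon n).refl _) (braidCon_of_braidMove hm))
        ((braidCon n).refl _)

def wordCon (n : ℕ) : Con (Word n) where
  r u v := FreeMonoid.toList u ≈ᵇ FreeMonoid.toList v
  iseqv := ⟨fun _ => .refl _, .symm, .trans⟩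
  mul' {u v u' v'} h h' := by
    have h₁ : FreeMonoid.toList u ++ FreeMonoid.toList u' ≈ᵇ
        FreeMonoid.toList v ++ FreeMonoid.toList u' := by simpa using h.append [] _
    have h₂ : FreeMonoid.toList v ++ FreeMonoid.toList u' ≈ᵇ
        FreeMonoid.toList v ++ FreeMonoid.toList v' := by simpa using h'.append _ []
    simpa using h₁.trans h₂

lemma braidCon_le_wordCon : braidCon n ≤ wordCon n := by
  refine Con.conGen_le.2 fun x y h => ?_
  cases h with
  | comm i j hi hi' hj hj' hij =>
    obtain ⟨a, rfl⟩ := exists_letter_of_le hi hi'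
    obtain ⟨b, rfl⟩ := exists_letter_of_le hj hj'
    rw [sigma_val_succ, sigma_val_succ]
    exact WordEquiv.swap (by unfold Distant; omega) []
  | braid i hi hi' =>
    obtain ⟨a, rfl⟩ := exists_letter_of_le (n := n) hi (by omega)
    rw [sigma_val_succ, sigma_succ_val_succ a (by omega)]
    exact WordEquiv.braid (Or.inl rfl) []

lemma pr_eq_pr_iff {u v : Word n} :
    pr n u = pr n v ↔ FreeMonoid.toList u ≈ᵇ FreeMonoid.toList v :=
  ⟨fun h => braidCon_le_wordCon ((braidCon n).eq.1 h),
    fun h => (braidCon n).eq.2 (by simpa using braidCon_of_wordEquiv h)⟩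

lemma prl_eq_prl_iff {l₁ l₂ : List (Letter n)} : prl l₁ = prl l₂ ↔ l₁ ≈ᵇ l₂ := pr_eq_pr_iff

lemma len_mul (x y : PB n) : len n (x * y) = len n x + len n y := by
  simp only [len, map_mul, toAdd_mul]

lemma len_prl (l : List (Letter n)) : len n (prl l) = l.length := by
  induction l with
  | nil => simp [len]
  | cons a l ih =>
    rw [prl_cons, len_mul, ih, List.length_cons, add_comm]
    simp [len, gen, pr, lenHom]

lemma len_gen (a : Letter n) : len n (gen a) = 1 := by
  simpa [prl_singleton] using len_prl [a]

lemma eq_one_of_len_eq_zero {x : PB n} (h : len n x = 0) : x = 1 := by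
  obtain ⟨l, rfl⟩ := exists_prl_eq x
  rw [len_prl, List.length_eq_zero_iff] at h
  rw [h, prl_nil]

lemma len_le_of_dvd {x y : PB n} (h : x ∣ y) : len n x ≤ len n y := by
  obtain ⟨c, rfl⟩ := h
  rw [len_mul]
  omega

lemma eq_of_dvd_of_len_le {x y : PB n} (h : x ∣ y) (hl : len n y ≤ len n x) : x = y := by
  obtain ⟨c, rfl⟩ := h
  rw [len_mul] at hl
  rw [eq_one_of_len_eq_zero (by omega : len n c = 0), mul_one]

lemma exists_eq_gen_mul {x : PB n} (h : x ≠ 1) : ∃ (b : Letter n) (y : PB n), x = gen b * y := by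
  obtain ⟨_ | ⟨b, l⟩, rfl⟩ := exists_prl_eq x
  · exact absurd prl_nil h
  · exact ⟨b, prl l, prl_cons b l⟩

lemma headSplit_of_gen_mul_eq {a b : Letter n} {u v : List (Letter n)}
    (h : gen a * prl u = gen b * prl v) : HeadSplit a b u v := by
  rw [← prl_cons, ← prl_cons, prl_eq_prl_iff] at h
  exact headSplit_of_equiv h

lemma gen_mul_left_cancel {a : Letter n} {x y : PB n} (h : gen a * x = gen a * y) : x = y := by
  obtain ⟨u, rfl⟩ := exists_prl_eq x
  obtain ⟨v, rfl⟩ := exists_prl_eq y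
  exact prl_eq_prl_iff.2 ((headSplit_of_gen_mul_eq h).1 rfl)

instance : IsLeftCancelMul (PB n) where
  mul_left_cancel c x y h := by
    obtain ⟨l, rfl⟩ := exists_prl_eq c
    induction l with
    | nil => simpa using h
    | cons a l ih => exact ih (gen_mul_left_cancel (by simpa only [prl_cons, mul_assoc] using h))

lemma mul_dvd_mul_iff_left' (c : PB n) {x y : PB n} : c * x ∣ c * y ↔ x ∣ y := by
  refine ⟨fun ⟨d, hd⟩ => ⟨d, mul_left_cancel (by rw [hd, mul_assoc])⟩, mul_dvd_mul_left c⟩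

lemma exists_of_gen_mul_eq_of_distant {a b : Letter n} (hab : Distant a b) {x y : PB n}
    (h : gen a * x = gen b * y) : ∃ c, x = gen b * c ∧ y = gen a * c := by
  obtain ⟨u, rfl⟩ := exists_prl_eq x
  obtain ⟨v, rfl⟩ := exists_prl_eq y
  obtain ⟨C, hu, hv⟩ := (headSplit_of_gen_mul_eq h).2.1 hab
  exact ⟨prl C, by rw [← prl_cons, prl_eq_prl_iff]; exact hu,
    by rw [← prl_cons, prl_eq_prl_iff]; exact hv⟩

lemma exists_of_gen_mul_eq_of_adjacent {a b : Letter n} (hab : Adjacent a b) {x y : PB n}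
    (h : gen a * x = gen b * y) : ∃ c, x = gen b * (gen a * c) ∧ y = gen a * (gen b * c) := by
  obtain ⟨u, rfl⟩ := exists_prl_eq x
  obtain ⟨v, rfl⟩ := exists_prl_eq y
  obtain ⟨C, hu, hv⟩ := (headSplit_of_gen_mul_eq h).2.2 hab
  exact ⟨prl C, by rw [← prl_cons, ← prl_cons, prl_eq_prl_iff]; exact hu,
    by rw [← prl_cons, ← prl_cons, prl_eq_prl_iff]; exact hv⟩

lemma gen_mul_comm_of_distant {a b : Letter n} (h : Distant a b) :
    gen a * gen b = gen b * gen a := by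
  simpa [prl_cons] using prl_eq_prl_iff.2 (WordEquiv.swap h [])

lemma gen_braid_of_adjacent {a b : Letter n} (h : Adjacent a b) :
    gen a * gen b * gen a = gen b * gen a * gen b := by
  simpa [prl_cons, mul_assoc] using prl_eq_prl_iff.2 (WordEquiv.braid h [])

lemma gen_dvd_gen_mul_iff_of_distant {a b : Letter n} (hab : Distant a b) {x : PB n} :
    gen a ∣ gen b * x ↔ gen a ∣ x := by
  refine ⟨fun ⟨y, hy⟩ => ?_, fun ⟨y, hy⟩ => ⟨gen b * y, ?_⟩⟩
  · obtain ⟨c, -, hc⟩ := exists_of_gen_mul_eq_of_distant hab hy.symm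
    exact ⟨c, hc⟩
  · rw [hy, ← mul_assoc, ← mul_assoc, gen_mul_comm_of_distant hab]

lemma gen_dvd_gen_mul_iff_of_adjacent {a b : Letter n} (hab : Adjacent a b) {x : PB n} :
    gen a ∣ gen b * x ↔ gen a * gen b ∣ x := by
  refine ⟨fun ⟨y, hy⟩ => ?_, fun ⟨y, hy⟩ => ⟨gen b * gen a * y, ?_⟩⟩
  · obtain ⟨c, -, hc⟩ := exists_of_gen_mul_eq_of_adjacent hab hy.symm
    exact ⟨c, by rw [hc, mul_assoc]⟩
  · rw [hy, ← mul_assoc, ← mul_assoc, ← mul_assoc, ← mul_assoc, gen_braid_of_adjacent hab.symm]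

/-! ### Minimal elements and least common multiples -/

lemma ldvd_iff_dvd {x y : PB n} : ldvd n x y ↔ x ∣ y :=
  ⟨fun ⟨c, h⟩ => ⟨c, h.symm⟩, fun ⟨c, h⟩ => ⟨c, h.symm⟩⟩

lemma exists_mem_minimals_dvd {S : Set (PB n)} {x : PB n} (hx : x ∈ S) :
    ∃ y ∈ minimals n S, y ∣ x := by
  obtain ⟨y, ⟨hyS, hyx⟩, hmin⟩ :=
    (measure (len n)).wf.has_min {y | y ∈ S ∧ y ∣ x} ⟨x, hx, dvd_refl x⟩
  refine ⟨y, ⟨hyS, fun z hzS hzy => ?_⟩, hyx⟩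
  rw [ldvd_iff_dvd] at hzy
  exact eq_of_dvd_of_len_le hzy (not_lt.1 (hmin z ⟨hzS, hzy.trans hyx⟩))

lemma minimals_upperClosure (S : Set (PB n)) :
    minimals n {x | ∃ s ∈ S, s ∣ x} = minimals n S := by
  ext x
  simp only [minimals, ldvd_iff_dvd, Set.mem_ofPred_eq]
  constructor
  · rintro ⟨⟨s, hs, hsx⟩, hmin⟩
    obtain rfl := hmin s ⟨s, hs, dvd_refl s⟩ hsx
    exact ⟨hs, fun y hy hyx => hmin y ⟨y, hy, dvd_refl y⟩ hyx⟩
  · rintro ⟨hx, hmin⟩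
    refine ⟨⟨x, hx, dvd_refl x⟩, fun y ⟨s, hs, hsy⟩ hyx => ?_⟩
    obtain rfl := hmin s hs (hsy.trans hyx)
    exact eq_of_dvd_of_len_le hyx (len_le_of_dvd hsy)

def commonMultiples (S : Set (PB n)) : Set (PB n) := {e | ∀ s ∈ S, s ∣ e}

lemma isLcm_iff {S : Set (PB n)} {m : PB n} :
    IsLcm n S m ↔ m ∈ commonMultiples S ∧ ∀ e ∈ commonMultiples S, m ∣ e := by
  simp only [IsLcm, commonMultiples, ldvd_iff_dvd, Set.mem_ofPred_eq]

lemma isLcm_of_mem {S : Set (PB n)} {m : PB n} (hm : m ∈ S) (hS : ∀ s ∈ S, s ∣ m) :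
    IsLcm n S m :=
  isLcm_iff.2 ⟨hS, fun _ he => he m hm⟩

lemma IsLcm.mul_of_commonMultiples_eq {S T : Set (PB n)} {c m : PB n} (hm : IsLcm n T m)
    (hST : commonMultiples S = (c * ·) '' commonMultiples T) : IsLcm n S (c * m) := by
  rw [isLcm_iff] at hm ⊢
  refine ⟨hST ▸ ⟨m, hm.1, rfl⟩, fun e he => ?_⟩
  obtain ⟨e', he', rfl⟩ := hST ▸ he
  exact mul_dvd_mul_left c (hm.2 e' he')

lemma commonMultiples_pair_mul {s s' c : PB n} (hs : ∀ y, s ∣ c * y ↔ s' ∣ y) (x : PB n) :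
    commonMultiples {s, c * x} = (c * ·) '' commonMultiples {s', x} := by
  ext e
  simp only [commonMultiples, Set.mem_insert_iff, Set.mem_singleton_iff, forall_eq_or_imp,
    forall_eq, Set.mem_ofPred_eq, Set.mem_image]
  constructor
  · rintro ⟨hse, y, rfl⟩
    rw [mul_assoc, hs] at hse
    exact ⟨x * y, ⟨hse, dvd_mul_right x y⟩, (mul_assoc c x y).symm⟩
  · rintro ⟨e', ⟨hse', hxe'⟩, rfl⟩
    exact ⟨(hs e').2 hse', mul_dvd_mul_left c hxe'⟩

lemma IsLcm.commonMultiples_pair_eq {a x m s : PB n} (hm : IsLcm n {a, x} m) (has : a ∣ s) :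
    commonMultiples {s, x} = commonMultiples {s, m} := by
  rw [isLcm_iff] at hm
  ext e
  simp only [commonMultiples, Set.mem_insert_iff, Set.mem_singleton_iff, forall_eq_or_imp,
    forall_eq, Set.mem_ofPred_eq] at hm ⊢
  exact ⟨fun ⟨hse, hxe⟩ => ⟨hse, hm.2 e ⟨has.trans hse, hxe⟩⟩,
    fun ⟨hse, hme⟩ => ⟨hse, hm.1.2.trans hme⟩⟩

lemma exists_isLcm_gen {a : Letter n} {x z : PB n} (hz : z ∈ commonMultiples {gen a, x}) :
    ∃ m, IsLcm n {gen a, x} m := by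
  induction hN : len n z using Nat.strong_induction_on generalizing a x z with
  | _ N ih =>
  by_cases hx : x = 1
  · subst hx
    exact ⟨gen a, isLcm_of_mem (by simp) (by simp)⟩
  obtain ⟨b, x, rfl⟩ := exists_eq_gen_mul hx
  rcases eq_or_distant_or_adjacent a b with rfl | hab | hab
  · exact ⟨gen a * x, isLcm_of_mem (by simp) (by simp)⟩
  · have hcm := commonMultiples_pair_mul (fun y => gen_dvd_gen_mul_iff_of_distant hab) x
    obtain ⟨z', hz', rfl⟩ := hcm ▸ hz
    rw [len_mul, len_gen] at hN
    obtain ⟨m, hm⟩ := ih _ (by omega) hz' rfl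
    exact ⟨_, hm.mul_of_commonMultiples_eq hcm⟩
  · have hcm := commonMultiples_pair_mul (fun y => gen_dvd_gen_mul_iff_of_adjacent hab) x
    obtain ⟨z', hz', rfl⟩ := hcm ▸ hz
    rw [len_mul, len_gen] at hN
    have hz'a : z' ∈ commonMultiples {gen a, x} := by
      simp only [commonMultiples, Set.mem_insert_iff, Set.mem_singleton_iff, forall_eq_or_imp,
        forall_eq, Set.mem_ofPred_eq] at hz' ⊢
      exact ⟨(dvd_mul_right _ _).trans hz'.1, hz'.2⟩
    obtain ⟨m, hm⟩ := ih _ (by omega) hz'a rfl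
    obtain ⟨m', rfl⟩ := (isLcm_iff.1 hm).1 _ (Set.mem_insert _ _)
    have hcm' : commonMultiples {gen a * gen b, x} = (gen a * ·) '' commonMultiples {gen b, m'} :=
      (hm.commonMultiples_pair_eq (dvd_mul_right _ _)).trans
        (commonMultiples_pair_mul (fun y => mul_dvd_mul_iff_left' _) m')
    obtain ⟨z'', hz'', rfl⟩ := hcm' ▸ hz'
    rw [len_mul, len_gen] at hN
    obtain ⟨m₂, hm₂⟩ := ih _ (by omega) hz'' rfl
    exact ⟨_, (hm₂.mul_of_commonMultiples_eq hcm').mul_of_commonMultiples_eq hcm⟩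

/-! ### Lex-representatives and forbidden prefixes -/

/-- A witness that `l` followed by any word representing `x` is not lex-minimal: a suffix
`a :: t` of `l` with `σ_i ≼ (a :: t)·x` for some letter `i < a`. -/
def LexDescent : List (Letter n) → PB n → Prop
  | [], _ => False
  | a :: t, x => (∃ i < a, gen i ∣ prl (a :: t) * x) ∨ LexDescent t x

lemma lexDescent_append (l₁ l₂ : List (Letter n)) (x : PB n) :
    LexDescent (l₁ ++ l₂) x ↔ LexDescent l₁ (prl l₂ * x) ∨ LexDescent l₂ x := by
  induction l₁ with
  | nil => simp [LexDescent]
  | cons a t ih =>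
    rw [List.cons_append]
    simp only [LexDescent]
    rw [ih, ← List.cons_append, prl_append, mul_assoc, or_assoc]

lemma LexDescent.mono {l : List (Letter n)} {x y : PB n} (h : LexDescent l x) (hxy : x ∣ y) :
    LexDescent l y := by
  induction l with
  | nil => exact h
  | cons a t ih =>
    rcases h with ⟨i, hi, hdvd⟩ | h
    · exact .inl ⟨i, hi, hdvd.trans (mul_dvd_mul_left _ hxy)⟩
    · exact .inr (ih h)

lemma exists_lex_of_lexDescent {l : List (Letter n)} (h : LexDescent l 1) :
    ∃ l', prl l' = prl l ∧ List.Lex (· < ·) l' l := by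
  induction l with
  | nil => exact h.elim
  | cons a t ih =>
    rcases h with ⟨i, hi, c, hc⟩ | h
    · obtain ⟨l, rfl⟩ := exists_prl_eq c
      exact ⟨i :: l, by rw [prl_cons, ← hc, mul_one], .rel hi⟩
    · obtain ⟨l', he, hl'⟩ := ih h
      exact ⟨a :: l', by rw [prl_cons, prl_cons, he], .cons hl'⟩

lemma lexDescent_of_lex {l' l : List (Letter n)} (h : List.Lex (· < ·) l' l)
    (he : prl l' = prl l) : LexDescent l 1 := by
  induction h with
  | nil =>
    have := congrArg (len n) he
    rw [len_prl, len_prl] at this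
    simp at this
  | cons _ ih =>
    rw [prl_cons, prl_cons] at he
    exact .inr (ih (mul_left_cancel he))
  | @rel i t' a t hi =>
    exact .inl ⟨i, hi, prl t', by rw [mul_one, ← he, prl_cons]⟩

lemma mem_Ln_iff (w : Word n) : w ∈ Ln n ↔ ¬ LexDescent (FreeMonoid.toList w) 1 := by
  refine ⟨fun hw hd => ?_, fun hd v hv hlex => hd (lexDescent_of_lex hlex ?_)⟩
  · obtain ⟨l', he, hlex⟩ := exists_lex_of_lexDescent hd
    exact hw (FreeMonoid.ofList l') (he.trans (prl_toList w)) hlex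
  · rwa [prl_toList, prl_toList]

lemma mem_Ln_of_mul_mem {u s : Word n} (h : u * s ∈ Ln n) : u ∈ Ln n := by
  rw [mem_Ln_iff, FreeMonoid.toList_mul, lexDescent_append, not_or] at h
  rw [mem_Ln_iff]
  exact fun hd => h.1 (hd.mono (one_dvd _))

lemma exists_mem_Ln (β : PB n) : ∃ w : Word n, pr n w = β ∧ w ∈ Ln n := by
  obtain ⟨l₀, hl₀⟩ := exists_prl_eq β
  have hfin : {l : List (Letter n) | prl l = β}.Finite :=
    (List.finite_length_eq _ (len n β)).subset fun l hl => by
      simp only [Set.mem_ofPred_eq] at hl ⊢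
      rw [← hl, len_prl]
  obtain ⟨m, hm, hmin⟩ := Set.exists_min_image _ id hfin ⟨l₀, hl₀⟩
  refine ⟨FreeMonoid.ofList m, hm, fun v hv hlex => ?_⟩
  have hvm : m ≤ FreeMonoid.toList v := hmin _ (by rw [Set.mem_ofPred_eq, prl_toList, hv]; exact hm)
  exact not_lt.2 hvm hlex

lemma omegaRep_spec (β : PB n) : pr n (omegaRep n β) = β ∧ omegaRep n β ∈ Ln n := by
  rw [omegaRep, dif_pos (exists_mem_Ln β)]
  exact (exists_mem_Ln β).choose_spec

lemma mem_Fset_iff {w : Word n} {α : PB n} :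
    α ∈ Fset n w ↔ LexDescent (FreeMonoid.toList w) α := by
  have hω := omegaRep_spec α
  rw [Fset, Set.mem_ofPred_eq, mem_Ln_iff, not_not, FreeMonoid.toList_mul, lexDescent_append,
    prl_toList, hω.1, mul_one, or_iff_left]
  exact (mem_Ln_iff _).1 hω.2

lemma mem_Fset_of_dvd {w : Word n} {α α' : PB n} (h : α ∈ Fset n w) (hα : α ∣ α') :
    α' ∈ Fset n w :=
  mem_Fset_iff.2 ((mem_Fset_iff.1 h).mono hα)

lemma mem_Fset_mul_of {v : Word n} {a : Letter n} {α : PB n} :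
    α ∈ Fset n (v * FreeMonoid.of a) ↔ (∃ i < a, gen i ∣ gen a * α) ∨ gen a * α ∈ Fset n v := by
  rw [mem_Fset_iff, mem_Fset_iff, FreeMonoid.toList_mul, FreeMonoid.toList_of, lexDescent_append,
    prl_singleton, or_comm]
  simp [LexDescent, prl_singleton]

lemma gen_mul_mem_Fset_iff {v : Word n} {a : Letter n} {α : PB n} :
    gen a * α ∈ Fset n v ↔
      ∃ γ, (∃ β ∈ Fmin n v, IsLcm n {gen a, β} (gen a * γ)) ∧ γ ∣ α := by
  constructor
  · intro h
    obtain ⟨β, hβ, hβα⟩ := exists_mem_minimals_dvd h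
    have hz : gen a * α ∈ commonMultiples {gen a, β} := by
      simpa [commonMultiples] using hβα
    obtain ⟨m, hm⟩ := exists_isLcm_gen hz
    obtain ⟨γ, rfl⟩ := (isLcm_iff.1 hm).1 _ (Set.mem_insert _ _)
    exact ⟨γ, ⟨β, hβ, hm⟩, (mul_dvd_mul_iff_left' _).1 ((isLcm_iff.1 hm).2 _ hz)⟩
  · rintro ⟨γ, ⟨β, hβ, hm⟩, hγα⟩
    exact mem_Fset_of_dvd hβ.1
      (((isLcm_iff.1 hm).1 β (by simp)).trans (mul_dvd_mul_left _ hγα))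

lemma exists_lt_gen_dvd_gen_mul_iff {a : Letter n} {α : PB n} :
    (∃ i < a, gen i ∣ gen a * α) ↔
      (∃ i : Letter n, i.1 + 2 ≤ a.1 ∧ gen i ∣ α) ∨
      (∃ i : Letter n, i.1 + 1 = a.1 ∧ gen i * gen a ∣ α) := by
  constructor
  · rintro ⟨i, hi, h⟩
    rw [Fin.lt_def] at hi
    by_cases hd : i.1 + 2 ≤ a.1
    · exact .inl ⟨i, hd, (gen_dvd_gen_mul_iff_of_distant (.inl hd)).1 h⟩
    · exact .inr ⟨i, by omega, (gen_dvd_gen_mul_iff_of_adjacent (.inl (by omega))).1 h⟩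
  · rintro (⟨i, hi, h⟩ | ⟨i, hi, h⟩)
    · exact ⟨i, by rw [Fin.lt_def]; omega,
        (gen_dvd_gen_mul_iff_of_distant (.inl hi)).2 h⟩
    · exact ⟨i, by rw [Fin.lt_def]; omega,
        (gen_dvd_gen_mul_iff_of_adjacent (.inl hi)).2 h⟩

lemma pr_sigma_val_succ (a : Letter n) : pr n (sigma n (a.1 + 1)) = gen a := by
  rw [sigma_val_succ]
  rfl

lemma exists_sigma_le_dvd_iff {a : Letter n} {α : PB n} :
    (∃ x, (∃ i, 1 ≤ i ∧ i ≤ a.1 + 1 - 2 ∧ x = pr n (sigma n i)) ∧ x ∣ α) ↔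
      ∃ i : Letter n, i.1 + 2 ≤ a.1 ∧ gen i ∣ α := by
  constructor
  · rintro ⟨_, ⟨i, hi₁, hi₂, rfl⟩, h⟩
    obtain ⟨b, rfl⟩ := exists_letter_of_le (n := n) hi₁ (by omega)
    exact ⟨b, by omega, pr_sigma_val_succ b ▸ h⟩
  · rintro ⟨i, hi, h⟩
    exact ⟨_, ⟨i.1 + 1, by omega, by omega, (pr_sigma_val_succ i).symm⟩, h⟩

lemma exists_sigma_pred_mul_dvd_iff {a : Letter n} {α : PB n} :
    (∃ x, (2 ≤ a.1 + 1 ∧ x = pr n (sigma n (a.1 + 1 - 1) * FreeMonoid.of a)) ∧ x ∣ α) ↔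
      ∃ i : Letter n, i.1 + 1 = a.1 ∧ gen i * gen a ∣ α := by
  constructor
  · rintro ⟨_, ⟨ha, rfl⟩, h⟩
    obtain ⟨b, hb⟩ := exists_letter_of_le (n := n) (i := a.1) (by omega) (by omega)
    rw [Nat.add_sub_cancel, hb, map_mul, pr_sigma_val_succ] at h
    exact ⟨b, hb.symm, h⟩
  · rintro ⟨i, hi, h⟩
    refine ⟨_, ⟨by omega, ?_⟩, h⟩
    rw [Nat.add_sub_cancel, ← hi, map_mul, pr_sigma_val_succ]
    rfl

theorem statement_3_general (n : ℕ) (v : Word n) (j : ℕ)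
    (hj1 : 1 ≤ j) (hj2 : j ≤ n - 1) (hw : v * sigma n j ∈ Ln n) :
    v ∈ Ln n ∧
    Fmin n (v * sigma n j) =
      minimals n
        (({x : PB n | ∃ i : ℕ, 1 ≤ i ∧ i ≤ j - 2 ∧ x = pr n (sigma n i)} ∪
         {x : PB n | 2 ≤ j ∧ x = pr n (sigma n (j - 1) * sigma n j)}) ∪
         {γ : PB n | ∃ β ∈ Fmin n v,
            IsLcm n {pr n (sigma n j), β} (pr n (sigma n j) * γ)}) := by
  refine ⟨mem_Ln_of_mul_mem hw, ?_⟩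
  obtain ⟨a, rfl⟩ := exists_letter_of_le hj1 hj2
  rw [Fmin]
  conv_rhs => rw [← minimals_upperClosure]
  congr 1
  ext α
  rw [sigma_val_succ, Set.mem_ofPred_eq, mem_Fset_mul_of, exists_lt_gen_dvd_gen_mul_iff,
    gen_mul_mem_Fset_iff]
  simp only [Set.mem_union, Set.mem_ofPred_eq, or_and_right, exists_or]
  rw [exists_sigma_le_dvd_iff, exists_sigma_pred_mul_dvd_iff]
  rfl

/-- if `w = vσ_j ∈ L_n` then `v ∈ L_n` and `F_n^min(w)` is the set of
`≼`-minimal elements of `{σ_1,…,σ_(j-2), σ_(j-1)σ_j} ∪ {σ_j∖β : β ∈ F_n^min(v)}`. -/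
theorem statement_3 (n : ℕ) (hn : 2 ≤ n) (v : Word n) (j : ℕ)
    (hj1 : 1 ≤ j) (hj2 : j ≤ n - 1) (hw : v * sigma n j ∈ Ln n) :
    v ∈ Ln n ∧
    Fmin n (v * sigma n j) =
      minimals n
        (({x : PB n | ∃ i : ℕ, 1 ≤ i ∧ i ≤ j - 2 ∧ x = pr n (sigma n i)} ∪
         {x : PB n | 2 ≤ j ∧ x = pr n (sigma n (j - 1) * sigma n j)}) ∪
         {γ : PB n | ∃ β ∈ Fmin n v,
            IsLcm n {pr n (sigma n j), β} (pr n (sigma n j) * γ)}) :=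
  statement_3_general n v j hj1 hj2 hw

end BraidPaper
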